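/- In the shock-surface setting, the following five identities hold: (i) 1/(ψ²C²) = B(1 + A E²/C²) = (B/A)(1 − k r²); (ii) C = R² A; (iii) E/C = −Ṙ r / A; (iv) E²/C² = (−A + (1 − k r²))/A²; (v) Ṙ² r² = −A + (1 − k r²). -/
import Mathlib


open Real

/-- the five identities of Smoller–Temple's Proposition 1 on the shock
surface `M(r̄) = (4π/3)ρ r̄³` matching the FRW and TOV metrics. -/
theorem stmt_3 (𝒢 k ρ R Rdot r rb M A C E ψ B : ℝ)
    (h𝒢 : 0 < 𝒢) (hR : 0 < R) (hkr : 1 - k * r ^ 2 ≠ 0)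
    (hrb : rb = R * r) (hrb0 : rb ≠ 0)
    (hFried : Rdot ^ 2 + k = 8 * π * 𝒢 / 3 * ρ * R ^ 2)
    (hM : M = 4 * π / 3 * ρ * rb ^ 3)
    (hA : A = 1 - 2 * 𝒢 * M / rb) (hA0 : A ≠ 0)
    (hC : C = R ^ 2 * (1 - 8 * π * 𝒢 / 3 * ρ * R ^ 2 * r ^ 2))
    (hE : E = -(R * Rdot * rb))
    (hψ : ψ ≠ 0)
    (hmatch : B * (R ^ 2 - k * rb ^ 2) * ψ ^ 2 * C = 1) :
    1 / (ψ ^ 2 * C ^ 2) = B * (1 + A * E ^ 2 / C ^ 2) ∧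
    1 / (ψ ^ 2 * C ^ 2) = B / A * (1 - k * r ^ 2) ∧
    C = R ^ 2 * A ∧
    E / C = -(Rdot * r) / A ∧
    E ^ 2 / C ^ 2 = (-A + (1 - k * r ^ 2)) / A ^ 2 ∧
    Rdot ^ 2 * r ^ 2 = -A + (1 - k * r ^ 2) := by
  have hR0 : R ≠ 0 := ne_of_gt hR
  have hr0 : r ≠ 0 := by
    intro h; apply hrb0; rw [hrb, h, mul_zero]
  have hAeq : A = 1 - (Rdot ^ 2 + k) * r ^ 2 := by
    rw [hA, hM, hFried, hrb]
    field_simp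
    ring
  have hCA : C = R ^ 2 * A := by
    rw [hC, ← hFried, hAeq]
  have hE2 : E = -(R ^ 2 * Rdot * r) := by rw [hE, hrb]; ring
  have hC0 : C ≠ 0 := by
    rw [hCA]; exact mul_ne_zero (pow_ne_zero _ hR0) hA0
  have h5 : Rdot ^ 2 * r ^ 2 = -A + (1 - k * r ^ 2) := by
    rw [hAeq]; ring
  have h4 : E / C = -(Rdot * r) / A := by
    rw [hE2, hCA]; field_simp
  have h3 : E ^ 2 / C ^ 2 = (-A + (1 - k * r ^ 2)) / A ^ 2 := by
    rw [← h5, hE2, hCA]; field_simp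
  have h2 : 1 / (ψ ^ 2 * C ^ 2) = B / A * (1 - k * r ^ 2) := by
    have hm' : B * (R ^ 2 * (1 - k * r ^ 2)) * ψ ^ 2 * C = 1 := by
      rw [hrb] at hmatch; linear_combination hmatch
    have hψC2 : ψ ^ 2 * C ^ 2 ≠ 0 := by positivity
    rw [div_mul_eq_mul_div, div_eq_div_iff hψC2 hA0]
    linear_combination (-A) * hm' + (-(B * (1 - k * r ^ 2) * ψ ^ 2 * C)) * hCA
  refine ⟨?_, h2, hCA, h4, h3, h5⟩
  rw [h2, show A * E ^ 2 / C ^ 2 = A * (E ^ 2 / C ^ 2) from by ring, h3]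
  field_simp
  ring
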